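/- Fix positive integers m0, m, a real t0, and constants a < 0, b < 0, α < 0. Let μ_{j1,0} ∈ ℝ^k and symmetric positive definite Σ_{j1,0} for j1 ∈ {1,…,m0}, and μ_{j2,f} ∈ ℝ^k and symmetric positive definite Σ_{j2,f} for j2 ∈ {1,…,m}; let λ0 ∈ Δ^{m0−1} and λf ∈ Δ^{m−1}. With μ_{j2}(t), Σ_{j2}(t), λ_{j1,0}(t), λ_{j2}(t) defined as in Proposition 1 (exponential interpolation of means, matrix-square-root interpolation of covariances, exponentially decaying mixing proportions), define the time-varying Gaussian mixture φ(x,t) = Σ_{j1} λ_{j1,0}(t)·ρ(x; μ_{j1,0}, Σ_{j1,0}) + Σ_{j2} λ_{j2}(t)·ρ(x; μ_{j2}(t), Σ_{j2}(t)), the initial mixture φ_0(x) = Σ_{j1} λ0_{j1}·ρ(x; μ_{j1,0}, Σ_{j1,0}), and the terminal mixture φ_f(x) = Σ_{j2} λf_{j2}·ρ(x; μ_{j2,f}, Σ_{j2,f}). Then the L² norm ‖φ(·,t) − φ_0‖_{L²(ℝ^k)} → 0 as t → t0 (within [t0,∞)), and ‖φ(·,t) − φ_f‖_{L²(ℝ^k)}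 → 0 as t → ∞. -/

import Mathlib

open Real Filter Topology MeasureTheory
open scoped Classical

/-- The (unique) positive semidefinite square root of a positive semidefinite
real matrix (junk value `0` if the matrix is not positive semidefinite). -/
noncomputable def psdSqrt {k : ℕ} (M : Matrix (Fin k) (Fin k) ℝ) :
    Matrix (Fin k) (Fin k) ℝ :=
  if h : M.PosSemidef then
    (h.1.eigenvectorUnitary : Matrix (Fin k) (Fin k) ℝ) *
      Matrix.diagonal ((RCLike.ofReal : ℝ → ℝ) ∘ (fun x => Real.sqrt x) ∘ h.1.eigenvalues) *
      (star h.1.eigenvectorUnitary : Matrix (Fin k) (Fin k) ℝ)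
  else 0

lemma psdSqrt_eq_cfc {k : ℕ} {M : Matrix (Fin k) (Fin k) ℝ} (hM : M.PosSemidef) :
    psdSqrt M = cfc Real.sqrt M := by
  rw [psdSqrt, dif_pos hM, hM.1.cfc_eq, Matrix.IsHermitian.cfc, Unitary.conjStarAlgAut_apply]

open scoped MatrixOrder in
lemma psdSqrt_mul_self' {k : ℕ} {M : Matrix (Fin k) (Fin k) ℝ} (hM : M.PosSemidef) :
    psdSqrt M * psdSqrt M = M := by
  have h0 : 0 ≤ M := hM.nonneg
  rw [psdSqrt_eq_cfc hM, ← cfc_mul (a := M) Real.sqrt Real.sqrt]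
  conv_rhs => rw [← cfc_id' ℝ M]
  refine cfc_congr fun x hx => ?_
  exact Real.mul_self_sqrt (spectrum_nonneg_of_nonneg h0 hx)

open scoped MatrixOrder in
lemma psdSqrt_posSemidef' {k : ℕ} {M : Matrix (Fin k) (Fin k) ℝ} (hM : M.PosSemidef) :
    (psdSqrt M).PosSemidef := by
  rw [psdSqrt_eq_cfc hM]
  exact Matrix.nonneg_iff_posSemidef.mp (cfc_nonneg fun x _ => Real.sqrt_nonneg x)

/-- The multivariate Gaussian probability density
`ρ(x; μ, Σ) = exp(−(1/2)(x−μ)ᵀ Σ⁻¹ (x−μ)) / √(det Σ · (2π)^k)`. -/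
noncomputable def gaussPDF {k : ℕ} (μ : Fin k → ℝ) (S : Matrix (Fin k) (Fin k) ℝ)
    (x : Fin k → ℝ) : ℝ :=
  Real.exp (-(1 / 2 : ℝ) * (dotProduct (x - μ) (S⁻¹.mulVec (x - μ)))) /
    Real.sqrt (S.det * (2 * Real.pi) ^ k)

lemma integrable_exp_neg_sum_sq {k : ℕ} {cc : ℝ} (hc : 0 < cc) :
    Integrable (fun x : Fin k → ℝ => Real.exp (-cc * ∑ i, x i ^ 2)) := by
  have h : (fun x : Fin k → ℝ => Real.exp (-cc * ∑ i, x i ^ 2))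
      = fun x => ∏ i, Real.exp (-cc * x i ^ 2) := by
    funext x
    rw [← Real.exp_sum, ← Finset.mul_sum]
  rw [h]
  exact MeasureTheory.Integrable.fintype_prod (fun _ => integrable_exp_neg_mul_sq hc)

/-- perturbation bound for quadratic forms -/
lemma abs_dotProduct_mulVec_le {k : ℕ} (A : Matrix (Fin k) (Fin k) ℝ) (y : Fin k → ℝ) :
    |dotProduct y (A.mulVec y)| ≤ (∑ i, ∑ j, |A i j|) * ∑ i, y i ^ 2 := by
  have h1 : dotProduct y (A.mulVec y) = ∑ i, ∑ j, y i * (A i j * y j) := by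
    simp [dotProduct, Matrix.mulVec, Finset.mul_sum]
  rw [h1]
  have hsq : ∀ i j : Fin k, |y i| * |y j| ≤ ∑ l, y l ^ 2 := by
    intro i j
    have h2 : y i ^ 2 ≤ ∑ l, y l ^ 2 :=
      Finset.single_le_sum (fun l _ => sq_nonneg (y l)) (Finset.mem_univ i)
    have h3 : y j ^ 2 ≤ ∑ l, y l ^ 2 :=
      Finset.single_le_sum (fun l _ => sq_nonneg (y l)) (Finset.mem_univ j)
    have h4 : (|y i| - |y j|)^2 ≥ 0 := sq_nonneg _
    have h5 : |y i|^2 = y i ^2 := sq_abs _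
    have h6 : |y j|^2 = y j ^2 := sq_abs _
    nlinarith [abs_nonneg (y i), abs_nonneg (y j)]
  calc |∑ i, ∑ j, y i * (A i j * y j)| ≤ ∑ i, ∑ j, |y i * (A i j * y j)| := by
        refine (Finset.abs_sum_le_sum_abs _ _).trans (Finset.sum_le_sum fun i _ => Finset.abs_sum_le_sum_abs _ _)
    _ ≤ ∑ i, ∑ j, |A i j| * (∑ l, y l ^ 2) := by
        refine Finset.sum_le_sum fun i _ => Finset.sum_le_sum fun j _ => ?_
        have : |y i * (A i j * y j)| = |A i j| * (|y i| * |y j|) := by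
          rw [abs_mul, abs_mul]; ring
        rw [this]
        exact mul_le_mul_of_nonneg_left (hsq i j) (abs_nonneg _)
    _ = (∑ i, ∑ j, |A i j|) * ∑ i, y i ^ 2 := by
        simp [Finset.sum_mul]

lemma sum_sq_mulVec_le {k : ℕ} (A : Matrix (Fin k) (Fin k) ℝ) (z : Fin k → ℝ) :
    ∑ i, (A.mulVec z i)^2 ≤ (∑ i, ∑ j, A i j ^ 2) * ∑ j, z j ^ 2 := by
  rw [Finset.sum_mul]
  refine Finset.sum_le_sum fun i _ => ?_
  have : A.mulVec z i = ∑ j, A i j * z j := by simp [Matrix.mulVec, dotProduct]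
  rw [this]
  exact Finset.sum_mul_sq_le_sq_mul_sq _ _ _

/-- A positive definite real matrix has a uniform quadratic-form lower bound. -/
lemma posDef_quad_lower {k : ℕ} {M : Matrix (Fin k) (Fin k) ℝ} (hM : M.PosDef) :
    ∃ c > 0, ∀ y : Fin k → ℝ, c * ∑ i, y i ^ 2 ≤ dotProduct y (M.mulVec y) := by
  have hP : M.PosSemidef := hM.posSemidef
  set B := psdSqrt M with hB
  have hBps : B.PosSemidef := psdSqrt_posSemidef' hP
  have hBH : B.transpose = B := by
    have := hBps.isHermitian
    rwa [Matrix.IsHermitian, Matrix.conjTranspose_eq_transpose_of_trivial] at this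
  have hBB : B * B = M := psdSqrt_mul_self' hP
  have hdetB : B.det ≠ 0 := by
    intro h
    have : M.det = 0 := by rw [← hBB, Matrix.det_mul, h, mul_zero]
    exact (hM.det_pos.ne' this)
  -- quadratic form equals sum of squares of B y
  have hquad : ∀ y : Fin k → ℝ, dotProduct y (M.mulVec y) = ∑ i, (B.mulVec y i)^2 := by
    intro y
    rw [← hBB, ← Matrix.mulVec_mulVec]
    rw [Matrix.dotProduct_mulVec]
    have h7 : Matrix.vecMul y B = B.mulVec y := by
      conv_lhs => rw [← hBH]
      rw [Matrix.vecMul_transpose]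
    rw [h7]
    simp [dotProduct, sq]
  set C := ∑ i, ∑ j, (B⁻¹ i j) ^ 2 with hC
  have hCnon : 0 ≤ C := Finset.sum_nonneg fun i _ => Finset.sum_nonneg fun j _ => sq_nonneg _
  rcases eq_or_lt_of_le hCnon with hC0 | hCpos
  · -- C = 0 : then B⁻¹ = 0, so 1 = 0 in the matrix ring, so everything is zero
    refine ⟨1, one_pos, fun y => ?_⟩
    have hBinv0 : B⁻¹ = 0 := by
      ext i j
      have h1 : ∀ i ∈ Finset.univ, (0:ℝ) ≤ ∑ j, (B⁻¹ i j)^2 :=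
        fun i _ => Finset.sum_nonneg fun j _ => sq_nonneg _
      have h2 := (Finset.sum_eq_zero_iff_of_nonneg h1).mp hC0.symm i (Finset.mem_univ i)
      have h3 := (Finset.sum_eq_zero_iff_of_nonneg (fun j _ => sq_nonneg (B⁻¹ i j))).mp h2 j (Finset.mem_univ j)
      simpa [sq_eq_zero_iff] using h3
    have h1 : (1 : Matrix (Fin k) (Fin k) ℝ) = 0 := by
      have := Matrix.nonsing_inv_mul B (by simpa [isUnit_iff_ne_zero] using hdetB)
      rw [hBinv0, Matrix.zero_mul] at this
      exact this.symm
    have hy : y = 0 := by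
      have : (1 : Matrix (Fin k) (Fin k) ℝ).mulVec y = y := Matrix.one_mulVec y
      rw [h1, Matrix.zero_mulVec] at this
      exact this.symm
    subst hy
    simp [hquad]
  · refine ⟨1 / C, by positivity, fun y => ?_⟩
    have key : ∑ i, y i ^ 2 ≤ C * ∑ i, (B.mulVec y i)^2 := by
      have h1 : y = B⁻¹.mulVec (B.mulVec y) := by
        rw [Matrix.mulVec_mulVec, Matrix.nonsing_inv_mul B (by simpa [isUnit_iff_ne_zero] using hdetB),
          Matrix.one_mulVec]
      calc ∑ i, y i ^ 2 = ∑ i, (B⁻¹.mulVec (B.mulVec y) i)^2 := by rw [← h1]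
        _ ≤ C * ∑ i, (B.mulVec y i)^2 := sum_sq_mulVec_le _ _
    rw [hquad]
    rw [div_mul_eq_mul_div, mul_comm, mul_div_assoc, mul_one_div, div_le_iff₀ hCpos]
    calc (∑ i, y i ^2) ≤ C * ∑ i, (B.mulVec y i)^2 := key
      _ = (∑ i, (B.mulVec y i)^2) * C := by ring

/-- Pointwise Gaussian bound by an integrable envelope. -/
lemma gaussPDF_le {k : ℕ} {μ : Fin k → ℝ} {S : Matrix (Fin k) (Fin k) ℝ}
    {cq d R : ℝ} (hcq : 0 < cq) (hd : 0 < d)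
    (hquad : ∀ y : Fin k → ℝ, cq * ∑ i, y i ^ 2 ≤ dotProduct y (S⁻¹.mulVec y))
    (hdet : d ≤ S.det) (hμ : ∑ i, μ i ^ 2 ≤ R) (x : Fin k → ℝ) :
    gaussPDF μ S x ≤ Real.exp (cq * R / 2) / Real.sqrt (d * (2 * Real.pi) ^ k)
      * Real.exp (-(cq / 4) * ∑ i, x i ^ 2) := by
  have hπ : (0:ℝ) < (2 * Real.pi) ^ k := by positivity
  have hR : 0 ≤ R := le_trans (Finset.sum_nonneg fun i _ => sq_nonneg _) hμ
  have hq1 : cq * ∑ i, (x i - μ i) ^ 2 ≤ dotProduct (x - μ) (S⁻¹.mulVec (x - μ)) := by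
    have := hquad (x - μ)
    simpa using this
  have hq2 : cq * ((∑ i, x i ^ 2) / 2 - R) ≤ cq * ∑ i, (x i - μ i) ^ 2 := by
    refine mul_le_mul_of_nonneg_left ?_ hcq.le
    have h1 : ∀ i : Fin k, x i ^ 2 / 2 - μ i ^2 ≤ (x i - μ i)^2 := fun i => by nlinarith [sq_nonneg (x i - 2 * μ i)]
    calc (∑ i, x i ^ 2) / 2 - R ≤ (∑ i, x i ^ 2)/2 - ∑ i, μ i ^2 := by linarith
      _ = ∑ i, (x i ^2 / 2 - μ i ^2) := by rw [Finset.sum_sub_distrib, Finset.sum_div]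
      _ ≤ ∑ i, (x i - μ i)^2 := Finset.sum_le_sum fun i _ => h1 i
  have hexp : Real.exp (-(1 / 2 : ℝ) * (dotProduct (x - μ) (S⁻¹.mulVec (x - μ))))
      ≤ Real.exp (cq * R / 2) * Real.exp (-(cq / 4) * ∑ i, x i ^ 2) := by
    rw [← Real.exp_add]
    apply Real.exp_le_exp.mpr
    nlinarith [hq1, hq2]
  have hden : Real.sqrt (d * (2 * Real.pi) ^ k) ≤ Real.sqrt (S.det * (2 * Real.pi) ^ k) := by
    apply Real.sqrt_le_sqrt
    exact mul_le_mul_of_nonneg_right hdet hπ.le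
  have hdenpos : 0 < Real.sqrt (d * (2 * Real.pi) ^ k) := Real.sqrt_pos.mpr (by positivity)
  unfold gaussPDF
  calc Real.exp (-(1 / 2 : ℝ) * (dotProduct (x - μ) (S⁻¹.mulVec (x - μ)))) /
      Real.sqrt (S.det * (2 * Real.pi) ^ k)
      ≤ (Real.exp (cq * R / 2) * Real.exp (-(cq / 4) * ∑ i, x i ^ 2)) /
        Real.sqrt (d * (2 * Real.pi) ^ k) :=
        div_le_div₀ (by positivity) hexp hdenpos hden
    _ = Real.exp (cq * R / 2) / Real.sqrt (d * (2 * Real.pi) ^ k)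
        * Real.exp (-(cq / 4) * ∑ i, x i ^ 2) := by ring

lemma continuous_gaussPDF {k : ℕ} (μ : Fin k → ℝ) (S : Matrix (Fin k) (Fin k) ℝ) :
    Continuous (gaussPDF μ S) := by
  unfold gaussPDF
  apply Continuous.div_const
  apply Real.continuous_exp.comp
  apply Continuous.mul continuous_const
  have h1 : Continuous fun x : Fin k → ℝ => x - μ := continuous_id.sub continuous_const
  exact h1.dotProduct (continuous_const.matrix_mulVec h1)

lemma tendsto_matrix_elem {ι : Type*} {l : Filter ι} {k : ℕ}
    {S : ι → Matrix (Fin k) (Fin k) ℝ} {S' : Matrix (Fin k) (Fin k) ℝ}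
    (hS : Tendsto S l (𝓝 S')) (i j : Fin k) :
    Tendsto (fun t => S t i j) l (𝓝 (S' i j)) := by
  have hc : Continuous fun M : Matrix (Fin k) (Fin k) ℝ => M i j :=
    continuous_id.matrix_elem i j
  exact (hc.tendsto S').comp hS

lemma tendsto_matrix_inv {ι : Type*} {l : Filter ι} {k : ℕ}
    {S : ι → Matrix (Fin k) (Fin k) ℝ} {S' : Matrix (Fin k) (Fin k) ℝ}
    (hS : Tendsto S l (𝓝 S')) (hdet : S'.det ≠ 0) :
    Tendsto (fun t => (S t)⁻¹) l (𝓝 S'⁻¹) := by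
  have h : ContinuousAt Ring.inverse S'.det := by
    rw [Ring.inverse_eq_inv']
    exact continuousAt_inv₀ hdet
  exact ((continuousAt_matrix_inv S' h).tendsto).comp hS

lemma tendsto_matrix_det {ι : Type*} {l : Filter ι} {k : ℕ}
    {S : ι → Matrix (Fin k) (Fin k) ℝ} {S' : Matrix (Fin k) (Fin k) ℝ}
    (hS : Tendsto S l (𝓝 S')) :
    Tendsto (fun t => (S t).det) l (𝓝 S'.det) :=
  ((continuous_id.matrix_det).tendsto S').comp hS

lemma tendsto_gaussPDF {ι : Type*} {l : Filter ι} {k : ℕ}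
    {μ : ι → Fin k → ℝ} {S : ι → Matrix (Fin k) (Fin k) ℝ}
    {μ' : Fin k → ℝ} {S' : Matrix (Fin k) (Fin k) ℝ}
    (hμ : Tendsto μ l (𝓝 μ')) (hS : Tendsto S l (𝓝 S')) (hdet : 0 < S'.det)
    (x : Fin k → ℝ) :
    Tendsto (fun t => gaussPDF (μ t) (S t) x) l (𝓝 (gaussPDF μ' S' x)) := by
  have hinv : Tendsto (fun t => (S t)⁻¹) l (𝓝 S'⁻¹) := tendsto_matrix_inv hS hdet.ne'
  have hsub : Tendsto (fun t => x - μ t) l (𝓝 (x - μ')) := tendsto_const_nhds.sub hμ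
  have hsub' : ∀ i : Fin k, Tendsto (fun t => (x - μ t) i) l (𝓝 ((x - μ') i)) := by
    intro i
    exact ((continuous_apply i).tendsto _).comp hsub
  have hmv : ∀ i : Fin k, Tendsto (fun t => (S t)⁻¹.mulVec (x - μ t) i) l
      (𝓝 (S'⁻¹.mulVec (x - μ') i)) := by
    intro i
    have : ∀ t, (S t)⁻¹.mulVec (x - μ t) i = ∑ j, (S t)⁻¹ i j * (x - μ t) j := by
      intro t; simp [Matrix.mulVec, dotProduct]
    simp_rw [this]
    have h2 : S'⁻¹.mulVec (x - μ') i = ∑ j, S'⁻¹ i j * (x - μ') j := by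
      simp [Matrix.mulVec, dotProduct]
    rw [h2]
    exact tendsto_finset_sum _ fun j _ => (tendsto_matrix_elem hinv i j).mul (hsub' j)
  have hdot : Tendsto (fun t => dotProduct (x - μ t) ((S t)⁻¹.mulVec (x - μ t))) l
      (𝓝 (dotProduct (x - μ') (S'⁻¹.mulVec (x - μ')))) := by
    have : ∀ t, dotProduct (x - μ t) ((S t)⁻¹.mulVec (x - μ t))
        = ∑ i, (x - μ t) i * (S t)⁻¹.mulVec (x - μ t) i := by
      intro t; simp [dotProduct]
    simp_rw [this]
    have h2 : dotProduct (x - μ') (S'⁻¹.mulVec (x - μ'))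
        = ∑ i, (x - μ') i * S'⁻¹.mulVec (x - μ') i := by simp [dotProduct]
    rw [h2]
    exact tendsto_finset_sum _ fun i _ => (hsub' i).mul (hmv i)
  have hnum : Tendsto (fun t => Real.exp (-(1/2 : ℝ) *
      dotProduct (x - μ t) ((S t)⁻¹.mulVec (x - μ t)))) l
      (𝓝 (Real.exp (-(1/2 : ℝ) * dotProduct (x - μ') (S'⁻¹.mulVec (x - μ'))))) :=
    (Real.continuous_exp.tendsto _).comp (hdot.const_mul _)
  have hden : Tendsto (fun t => Real.sqrt ((S t).det * (2 * Real.pi) ^ k)) l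
      (𝓝 (Real.sqrt (S'.det * (2 * Real.pi) ^ k))) :=
    (Real.continuous_sqrt.tendsto _).comp ((tendsto_matrix_det hS).mul_const _)
  have hdenne : Real.sqrt (S'.det * (2 * Real.pi) ^ k) ≠ 0 := by
    have : (0:ℝ) < S'.det * (2 * Real.pi)^k := by positivity
    exact (Real.sqrt_pos.mpr this).ne'
  exact hnum.div hden hdenne

lemma gaussPDF_nonneg {k : ℕ} (μ : Fin k → ℝ) (S : Matrix (Fin k) (Fin k) ℝ)
    (x : Fin k → ℝ) : 0 ≤ gaussPDF μ S x :=
  div_nonneg (Real.exp_nonneg _) (Real.sqrt_nonneg _)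

lemma tendsto_exp_lin_within (β t0 : ℝ) :
    Tendsto (fun t => Real.exp (β * (t - t0))) (𝓝[Set.Ici t0] t0) (𝓝 1) := by
  have hc : Continuous fun t : ℝ => Real.exp (β * (t - t0)) := by continuity
  have h := (hc.tendsto t0).mono_left (nhdsWithin_le_nhds (s := Set.Ici t0))
  simpa using h

lemma tendsto_exp_lin_atTop {β : ℝ} (hβ : β < 0) (t0 : ℝ) :
    Tendsto (fun t => Real.exp (β * (t - t0))) atTop (𝓝 0) := by
  apply Real.tendsto_exp_atBot.comp
  have h1 : Tendsto (fun t : ℝ => t - t0) atTop atTop :=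
    tendsto_atTop_add_const_right _ _ tendsto_id
  exact h1.const_mul_atTop_of_neg hβ

lemma psdSqrt_mul_self {k : ℕ} {M : Matrix (Fin k) (Fin k) ℝ} (hM : M.PosSemidef) :
    psdSqrt M * psdSqrt M = M := by
  exact psdSqrt_mul_self' hM

lemma psdSqrt_posSemidef {k : ℕ} {M : Matrix (Fin k) (Fin k) ℝ} (hM : M.PosSemidef) :
    (psdSqrt M).PosSemidef := by
  exact psdSqrt_posSemidef' hM

lemma psdSqrt_det_isUnit {k : ℕ} {M : Matrix (Fin k) (Fin k) ℝ} (hM : M.PosDef) :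
    IsUnit (psdSqrt M).det := by
  rw [isUnit_iff_ne_zero]
  intro h
  have h1 : M.det = 0 := by
    rw [← psdSqrt_mul_self hM.posSemidef, Matrix.det_mul, h, mul_zero]
  exact hM.det_pos.ne' h1

lemma psdSqrt_conjTranspose {k : ℕ} {M : Matrix (Fin k) (Fin k) ℝ} (hM : M.PosSemidef) :
    (psdSqrt M).conjTranspose = psdSqrt M :=
  (psdSqrt_posSemidef hM).isHermitian

lemma inv_conj_sq {k : ℕ} {A M : Matrix (Fin k) (Fin k) ℝ}
    (hAM : A * A = M) (hdet : IsUnit A.det) :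
    A⁻¹ * M ^ 2 * A⁻¹ = M := by
  have hAi : A⁻¹ * A = 1 := Matrix.nonsing_inv_mul A hdet
  have hiA : A * A⁻¹ = 1 := Matrix.mul_nonsing_inv A hdet
  have h1 : A⁻¹ * M = A := by
    rw [← hAM, ← Matrix.mul_assoc, hAi, Matrix.one_mul]
  have h2 : M * A⁻¹ = A := by
    rw [← hAM, Matrix.mul_assoc, hiA, Matrix.mul_one]
  rw [pow_two, ← Matrix.mul_assoc, Matrix.mul_assoc (A⁻¹ * M), h1, h2, hAM]

lemma inv_conj {k : ℕ} {A N : Matrix (Fin k) (Fin k) ℝ} (hdet : IsUnit A.det) :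
    A⁻¹ * (A * N * A) * A⁻¹ = N := by
  have hAi : A⁻¹ * A = 1 := Matrix.nonsing_inv_mul A hdet
  have hiA : A * A⁻¹ = 1 := Matrix.mul_nonsing_inv A hdet
  calc A⁻¹ * (A * N * A) * A⁻¹ = (A⁻¹ * A) * N * (A * A⁻¹) := by
        simp only [Matrix.mul_assoc]
    _ = N := by rw [hAi, hiA, Matrix.one_mul, Matrix.mul_one]

noncomputable def interpMat {k : ℕ} (P Q A : Matrix (Fin k) (Fin k) ℝ) (s : ℝ) :
    Matrix (Fin k) (Fin k) ℝ :=
  A⁻¹ * (s • P + (1 - s) • Q) ^ 2 * A⁻¹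

lemma continuous_interpMat {k : ℕ} (P Q A : Matrix (Fin k) (Fin k) ℝ) :
    Continuous (interpMat P Q A) := by
  unfold interpMat
  simp_rw [pow_two]
  exact (continuous_const.matrix_mul (((continuous_id.smul continuous_const).add
    ((continuous_const.sub continuous_id).smul continuous_const)).matrix_mul
    ((continuous_id.smul continuous_const).add
    ((continuous_const.sub continuous_id).smul continuous_const)))).matrix_mul continuous_const

lemma interpMat_one {k : ℕ} {P A : Matrix (Fin k) (Fin k) ℝ} (Q : Matrix (Fin k) (Fin k) ℝ)
    (hA : A * A = P) (hdet : IsUnit A.det) : interpMat P Q A 1 = P := by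
  unfold interpMat
  rw [show (1:ℝ) • P + (1 - (1:ℝ)) • Q = P by simp]
  exact inv_conj_sq hA hdet

lemma interpMat_zero {k : ℕ} {Q A : Matrix (Fin k) (Fin k) ℝ}
    (P N : Matrix (Fin k) (Fin k) ℝ)
    (hQ : Q * Q = A * N * A) (hdet : IsUnit A.det) : interpMat P Q A 0 = N := by
  unfold interpMat
  rw [show (0:ℝ) • P + (1 - (0:ℝ)) • Q = Q by simp]
  rw [pow_two, hQ]
  exact inv_conj hdet

/-- Core lemma: L² convergence of Gaussian mixtures under parameter convergence. -/
lemma mixture_L2_tendsto {k : ℕ} {J : Type*} [Fintype J] {l : Filter ℝ}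
    [l.IsCountablyGenerated]
    {w : ℝ → J → ℝ} {w' : J → ℝ} {ν : ℝ → J → Fin k → ℝ} {ν' : J → Fin k → ℝ}
    {Sg : ℝ → J → Matrix (Fin k) (Fin k) ℝ} {Sg' : J → Matrix (Fin k) (Fin k) ℝ}
    (hw : ∀ j, Tendsto (fun t => w t j) l (𝓝 (w' j)))
    (hν : ∀ j, Tendsto (fun t => ν t j) l (𝓝 (ν' j)))
    (hS : ∀ j, Tendsto (fun t => Sg t j) l (𝓝 (Sg' j)))
    (hPD : ∀ j, (Sg' j).PosDef) :
    Tendsto (fun t => ∫ x : Fin k → ℝ,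
        ((∑ j, w t j * gaussPDF (ν t j) (Sg t j) x)
          - ∑ j, w' j * gaussPDF (ν' j) (Sg' j) x) ^ 2) l (𝓝 0) := by
  rcases isEmpty_or_nonempty J with hJ | hJ
  · simp only [Finset.univ_eq_empty, Finset.sum_empty, sub_zero, sub_self,
      zero_pow, integral_zero]
    simpa using (tendsto_const_nhds : Tendsto (fun _ : ℝ => (0:ℝ)) l (𝓝 0))
  -- quadratic form lower bounds for the limit inverses
  have hql : ∀ j, ∃ c > 0, ∀ y : Fin k → ℝ,
      c * ∑ i, y i ^ 2 ≤ dotProduct y ((Sg' j)⁻¹.mulVec y) :=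
    fun j => posDef_quad_lower (hPD j).inv
  choose cq hcqpos hcq using hql
  set d : J → ℝ := fun j => (Sg' j).det / 2 with hd_def
  have hdpos : ∀ j, 0 < d j := fun j => half_pos (hPD j).det_pos
  set R : J → ℝ := fun j => (∑ i, (ν' j i) ^ 2) + 1 with hR_def
  set B : J → ℝ := fun j => |w' j| + 1 with hB_def
  have hBpos : ∀ j, 0 < B j := fun j => by positivity
  -- the global exponent
  obtain ⟨j₀⟩ := hJ
  set cmin : ℝ := Finset.univ.inf' ⟨j₀, Finset.mem_univ j₀⟩ (fun j => cq j / 2) with hcmin_def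
  have hcminpos : 0 < cmin := by
    rw [hcmin_def]
    exact (Finset.lt_inf'_iff _).2 fun j _ => half_pos (hcqpos j)
  have hcmin_le : ∀ j, cmin ≤ cq j / 2 :=
    fun j => Finset.inf'_le _ (Finset.mem_univ j)
  -- eventual control of all parameters
  have hev : ∀ᶠ t in l, ∀ j : J,
      d j ≤ (Sg t j).det ∧
      (∀ y : Fin k → ℝ, (cq j / 2) * ∑ i, y i ^ 2
        ≤ dotProduct y ((Sg t j)⁻¹.mulVec y)) ∧
      (∑ i, (ν t j i) ^ 2 ≤ R j) ∧ |w t j| ≤ B j := by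
    rw [eventually_all]
    intro j
    have E1 : ∀ᶠ t in l, d j ≤ (Sg t j).det :=
      (tendsto_matrix_det (hS j)).eventually
        (eventually_ge_nhds (half_lt_self (hPD j).det_pos))
    have E2 : ∀ᶠ t in l, ∀ y : Fin k → ℝ, (cq j / 2) * ∑ i, y i ^ 2
        ≤ dotProduct y ((Sg t j)⁻¹.mulVec y) := by
      have hinv : Tendsto (fun t => (Sg t j)⁻¹) l (𝓝 (Sg' j)⁻¹) :=
        tendsto_matrix_inv (hS j) (hPD j).det_pos.ne'
      have hD : Tendsto (fun t => ∑ i, ∑ i', |(Sg t j)⁻¹ i i' - (Sg' j)⁻¹ i i'|) l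
          (𝓝 (∑ i : Fin k, ∑ i' : Fin k, |(Sg' j)⁻¹ i i' - (Sg' j)⁻¹ i i'|)) :=
        tendsto_finset_sum _ fun i _ => tendsto_finset_sum _ fun i' _ =>
          ((tendsto_matrix_elem hinv i i').sub tendsto_const_nhds).abs
      have hD0 : (∑ i : Fin k, ∑ i' : Fin k, |(Sg' j)⁻¹ i i' - (Sg' j)⁻¹ i i'|) = 0 := by
        simp
      rw [hD0] at hD
      filter_upwards [hD.eventually (eventually_lt_nhds (half_pos (hcqpos j)))] with t ht y
      have hsplit : (Sg t j)⁻¹ = (Sg' j)⁻¹ + ((Sg t j)⁻¹ - (Sg' j)⁻¹) := by abel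
      have habs := abs_dotProduct_mulVec_le ((Sg t j)⁻¹ - (Sg' j)⁻¹) y
      have hsum_entries : (∑ i, ∑ i', |((Sg t j)⁻¹ - (Sg' j)⁻¹) i i'|)
          = ∑ i, ∑ i', |(Sg t j)⁻¹ i i' - (Sg' j)⁻¹ i i'| := by
        simp [Matrix.sub_apply]
      rw [hsum_entries] at habs
      have hynn : (0:ℝ) ≤ ∑ i, y i ^ 2 := Finset.sum_nonneg fun i _ => sq_nonneg _
      have hDy : (∑ i, ∑ i', |(Sg t j)⁻¹ i i' - (Sg' j)⁻¹ i i'|) * ∑ i, y i ^ 2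
          ≤ (cq j / 2) * ∑ i, y i ^ 2 :=
        mul_le_mul_of_nonneg_right ht.le hynn
      have hkey : dotProduct y ((Sg t j)⁻¹.mulVec y)
          = dotProduct y ((Sg' j)⁻¹.mulVec y)
            + dotProduct y (((Sg t j)⁻¹ - (Sg' j)⁻¹).mulVec y) := by
        conv_lhs => rw [hsplit]
        rw [Matrix.add_mulVec, dotProduct_add]
      have h1 := hcq j y
      have h2 := neg_abs_le (dotProduct y (((Sg t j)⁻¹ - (Sg' j)⁻¹).mulVec y))
      rw [hkey]
      linarith
    have E3 : ∀ᶠ t in l, ∑ i, (ν t j i) ^ 2 ≤ R j := by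
      have h : Tendsto (fun t => ∑ i, (ν t j i) ^ 2) l (𝓝 (∑ i, (ν' j i) ^ 2)) :=
        tendsto_finset_sum _ fun i _ =>
          (((continuous_apply i).tendsto _).comp (hν j)).pow 2
      exact h.eventually (eventually_le_nhds (lt_add_one _))
    have E4 : ∀ᶠ t in l, |w t j| ≤ B j :=
      ((hw j).abs).eventually (eventually_le_nhds (lt_add_one _))
    exact E1.and (E2.and (E3.and E4))
  -- constants for the envelope
  set C : J → ℝ := fun j =>
    Real.exp ((cq j / 2) * R j / 2) / Real.sqrt (d j * (2 * Real.pi) ^ k) with hC_def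
  set C' : J → ℝ := fun j =>
    Real.exp (cq j * (∑ i, (ν' j i) ^ 2) / 2) /
      Real.sqrt ((Sg' j).det * (2 * Real.pi) ^ k) with hC'_def
  have hCnn : ∀ j, 0 ≤ C j := fun j => by positivity
  have hC'nn : ∀ j, 0 ≤ C' j := fun j => by positivity
  set KK : ℝ := ∑ j, (B j * C j + |w' j| * C' j) with hKK_def
  have hKKnn : 0 ≤ KK :=
    Finset.sum_nonneg fun j _ => by positivity
  -- the dominating function
  set bound : (Fin k → ℝ) → ℝ :=
    fun x => KK ^ 2 * Real.exp (-(cmin / 2) * ∑ i, x i ^ 2) with hbound_def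
  have hbound_int : Integrable bound := by
    exact (integrable_exp_neg_sum_sq (half_pos hcminpos)).const_mul _
  set G : (Fin k → ℝ) → ℝ := fun x => ∑ j, w' j * gaussPDF (ν' j) (Sg' j) x with hG_def
  have hGcont : Continuous G :=
    continuous_finset_sum _ fun j _ => continuous_const.mul (continuous_gaussPDF _ _)
  have hmeas : ∀ᶠ t in l, AEStronglyMeasurable
      (fun x : Fin k → ℝ => ((∑ j, w t j * gaussPDF (ν t j) (Sg t j) x) - G x) ^ 2)
      (volume : Measure (Fin k → ℝ)) := by
    refine Eventually.of_forall fun t => ?_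
    have : Continuous fun x => ((∑ j, w t j * gaussPDF (ν t j) (Sg t j) x) - G x) ^ 2 :=
      ((continuous_finset_sum _ fun j _ =>
        continuous_const.mul (continuous_gaussPDF _ _)).sub hGcont).pow 2
    exact this.aestronglyMeasurable
  have hbd : ∀ᶠ t in l, ∀ᵐ x : Fin k → ℝ,
      ‖((∑ j, w t j * gaussPDF (ν t j) (Sg t j) x) - G x) ^ 2‖ ≤ bound x := by
    filter_upwards [hev] with t ht
    refine Eventually.of_forall fun x => ?_
    set Ex : ℝ := Real.exp (-(cmin / 4) * ∑ i, x i ^ 2) with hEx_def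
    have hExpos : 0 < Ex := Real.exp_pos _
    have hxnn : (0:ℝ) ≤ ∑ i, x i ^ 2 := Finset.sum_nonneg fun i _ => sq_nonneg _
    have hg : ∀ j, gaussPDF (ν t j) (Sg t j) x ≤ C j * Ex := by
      intro j
      obtain ⟨h1, h2, h3, _⟩ := ht j
      have hb := gaussPDF_le (half_pos (hcqpos j)) (hdpos j) h2 h1 h3 x
      refine hb.trans ?_
      rw [hC_def]
      refine mul_le_mul_of_nonneg_left ?_ (by positivity)
      apply Real.exp_le_exp.mpr
      have := hcmin_le j
      nlinarith
    have hg' : ∀ j, gaussPDF (ν' j) (Sg' j) x ≤ C' j * Ex := by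
      intro j
      have hb := gaussPDF_le (μ := ν' j) (hcqpos j) (hPD j).det_pos (hcq j) le_rfl le_rfl x
      refine hb.trans ?_
      rw [hC'_def]
      refine mul_le_mul_of_nonneg_left ?_ (by positivity)
      apply Real.exp_le_exp.mpr
      have h5 := hcmin_le j
      have h6 := hcqpos j
      nlinarith
    have habs : |(∑ j, w t j * gaussPDF (ν t j) (Sg t j) x) - G x| ≤ KK * Ex := by
      rw [hG_def]
      simp only [← Finset.sum_sub_distrib]
      refine (Finset.abs_sum_le_sum_abs _ _).trans ?_
      rw [hKK_def, Finset.sum_mul]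
      refine Finset.sum_le_sum fun j _ => ?_
      have h7 : |w t j * gaussPDF (ν t j) (Sg t j) x - w' j * gaussPDF (ν' j) (Sg' j) x|
          ≤ |w t j| * gaussPDF (ν t j) (Sg t j) x + |w' j| * gaussPDF (ν' j) (Sg' j) x := by
        refine (abs_sub _ _).trans ?_
        rw [abs_mul, abs_mul, abs_of_nonneg (gaussPDF_nonneg _ _ _),
          abs_of_nonneg (gaussPDF_nonneg _ _ _)]
      refine h7.trans ?_
      rw [add_mul]
      have h8 : |w t j| * gaussPDF (ν t j) (Sg t j) x ≤ B j * (C j * Ex) :=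
        mul_le_mul (ht j).2.2.2 (hg j) (gaussPDF_nonneg _ _ _) (hBpos j).le
      have h9 : |w' j| * gaussPDF (ν' j) (Sg' j) x ≤ |w' j| * (C' j * Ex) :=
        mul_le_mul_of_nonneg_left (hg' j) (abs_nonneg _)
      calc |w t j| * gaussPDF (ν t j) (Sg t j) x + |w' j| * gaussPDF (ν' j) (Sg' j) x
          ≤ B j * (C j * Ex) + |w' j| * (C' j * Ex) := add_le_add h8 h9
        _ = B j * C j * Ex + |w' j| * C' j * Ex := by ring
    have hsq : ((∑ j, w t j * gaussPDF (ν t j) (Sg t j) x) - G x) ^ 2 ≤ (KK * Ex)^2 := by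
      rw [← sq_abs]
      exact pow_le_pow_left₀ (abs_nonneg _) habs 2
    have hEx2 : (KK * Ex)^2 = bound x := by
      rw [hbound_def, hEx_def, mul_pow, sq (Real.exp _), ← Real.exp_add]
      congr 2
      ring
    rw [Real.norm_eq_abs, abs_of_nonneg (sq_nonneg _), ← hEx2]
    exact hsq
  have hlim : ∀ᵐ x : Fin k → ℝ, Tendsto
      (fun t => ((∑ j, w t j * gaussPDF (ν t j) (Sg t j) x) - G x) ^ 2) l
      (𝓝 ((fun _ : Fin k → ℝ => (0:ℝ)) x)) := by
    refine Eventually.of_forall fun x => ?_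
    have hmix : Tendsto (fun t => ∑ j, w t j * gaussPDF (ν t j) (Sg t j) x) l (𝓝 (G x)) :=
      tendsto_finset_sum _ fun j _ =>
        (hw j).mul (tendsto_gaussPDF (hν j) (hS j) (hPD j).det_pos x)
    have h0 : Tendsto (fun t => (∑ j, w t j * gaussPDF (ν t j) (Sg t j) x) - G x) l
        (𝓝 0) := by
      have := hmix.sub (tendsto_const_nhds (x := G x))
      simpa using this
    have := h0.pow 2
    simpa using this
  have key := MeasureTheory.tendsto_integral_filter_of_dominated_convergence
    (μ := (volume : Measure (Fin k → ℝ)))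
    (F := fun t (x : Fin k → ℝ) => ((∑ j, w t j * gaussPDF (ν t j) (Sg t j) x) - G x) ^ 2)
    (f := fun _ : Fin k → ℝ => (0:ℝ)) bound hmeas hbd hbound_int hlim
  simpa [hG_def] using key

/-- The time-varying Gaussian mixture `φ(·,t)` of Proposition 1
converges to the initial mixture `φ₀` in the spatial `L²` norm as `t → t0⁺`,
and to the terminal mixture `φ_f` in the spatial `L²` norm as `t → ∞`. -/
theorem gaussian_mixture_L2_limits
    (k m0 m : ℕ) (hm0 : 0 < m0) (hm : 0 < m) (t0 a b α : ℝ)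
    (ha : a < 0) (hb : b < 0) (hα : α < 0)
    (μ0 : Fin m0 → Fin k → ℝ) (S0 : Fin m0 → Matrix (Fin k) (Fin k) ℝ)
    (hS0 : ∀ j1, (S0 j1).PosDef)
    (μf : Fin m → Fin k → ℝ) (Sf : Fin m → Matrix (Fin k) (Fin k) ℝ)
    (hSf : ∀ j2, (Sf j2).PosDef)
    (lam0 : Fin m0 → ℝ) (hlam0 : ∀ j1, 0 ≤ lam0 j1) (hlam0sum : ∑ j1, lam0 j1 = 1)
    (lamf : Fin m → ℝ) (hlamf : ∀ j2, 0 ≤ lamf j2) (hlamfsum : ∑ j2, lamf j2 = 1)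
    -- a chosen index `j1` for each `j2`
    (c : Fin m → Fin m0)
    (μt : Fin m → ℝ → Fin k → ℝ)
    (hμt : ∀ j2 t, μt j2 t = μf j2 + Real.exp (a * (t - t0)) • (μ0 (c j2) - μf j2))
    (St : Fin m → ℝ → Matrix (Fin k) (Fin k) ℝ)
    (hSt : ∀ j2 t, St j2 t = (psdSqrt (S0 (c j2)))⁻¹ *
      (Real.exp (b * (t - t0)) • S0 (c j2) +
        (1 - Real.exp (b * (t - t0))) •
          psdSqrt (psdSqrt (S0 (c j2)) * Sf j2 * psdSqrt (S0 (c j2)))) ^ 2 *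
      (psdSqrt (S0 (c j2)))⁻¹)
    (lam10 : ℝ → Fin m0 → ℝ) (lam2 : ℝ → Fin m → ℝ)
    (hlam10 : ∀ t j1, lam10 t j1 = lam0 j1 * Real.exp (α * (t - t0)))
    (hlam2 : ∀ t j2, lam2 t j2
      = lamf j2 * (1 - ∑ j1, lam0 j1 * Real.exp (α * (t - t0))))
    (φ : (Fin k → ℝ) → ℝ → ℝ)
    (hφ : ∀ x t, φ x t = (∑ j1, lam10 t j1 * gaussPDF (μ0 j1) (S0 j1) x)
      + ∑ j2, lam2 t j2 * gaussPDF (μt j2 t) (St j2 t) x)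
    (φ0 : (Fin k → ℝ) → ℝ)
    (hφ0 : ∀ x, φ0 x = ∑ j1, lam0 j1 * gaussPDF (μ0 j1) (S0 j1) x)
    (φf : (Fin k → ℝ) → ℝ)
    (hφf : ∀ x, φf x = ∑ j2, lamf j2 * gaussPDF (μf j2) (Sf j2) x) :
    Tendsto (fun t => Real.sqrt (∫ x : Fin k → ℝ, (φ x t - φ0 x) ^ 2))
      (𝓝[Set.Ici t0] t0) (𝓝 0) ∧
    Tendsto (fun t => Real.sqrt (∫ x : Fin k → ℝ, (φ x t - φf x) ^ 2))
      atTop (𝓝 0) := by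
  have hAmul : ∀ j2, psdSqrt (S0 (c j2)) * psdSqrt (S0 (c j2)) = S0 (c j2) :=
    fun j2 => psdSqrt_mul_self (hS0 (c j2)).posSemidef
  have hAdet : ∀ j2, IsUnit (psdSqrt (S0 (c j2))).det :=
    fun j2 => psdSqrt_det_isUnit (hS0 (c j2))
  have hXps : ∀ j2, (psdSqrt (S0 (c j2)) * Sf j2 * psdSqrt (S0 (c j2))).PosSemidef := by
    intro j2
    have h := ((hSf j2).posSemidef).conjTranspose_mul_mul_same (B := psdSqrt (S0 (c j2)))
    rwa [psdSqrt_conjTranspose (hS0 (c j2)).posSemidef] at h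
  have hXmul : ∀ j2, psdSqrt (psdSqrt (S0 (c j2)) * Sf j2 * psdSqrt (S0 (c j2))) *
      psdSqrt (psdSqrt (S0 (c j2)) * Sf j2 * psdSqrt (S0 (c j2)))
      = psdSqrt (S0 (c j2)) * Sf j2 * psdSqrt (S0 (c j2)) :=
    fun j2 => psdSqrt_mul_self (hXps j2)
  have hSt_eq : ∀ j2 t, St j2 t = interpMat (S0 (c j2))
      (psdSqrt (psdSqrt (S0 (c j2)) * Sf j2 * psdSqrt (S0 (c j2))))
      (psdSqrt (S0 (c j2))) (Real.exp (b * (t - t0))) := by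
    intro j2 t
    rw [hSt]
    rfl
  have hlam2_eq : ∀ t j2, lam2 t j2 = lamf j2 * (1 - Real.exp (α * (t - t0))) := by
    intro t j2
    rw [hlam2, ← Finset.sum_mul, hlam0sum, one_mul]
  constructor
  · -- t → t0⁺
    have hE : ∀ β : ℝ, Tendsto (fun t => Real.exp (β * (t - t0)))
        (𝓝[Set.Ici t0] t0) (𝓝 1) := fun β => tendsto_exp_lin_within β t0
    have hw1 : ∀ j : Sum (Fin m0) (Fin m),
        Tendsto (fun t => Sum.elim (lam10 t) (lam2 t) j) (𝓝[Set.Ici t0] t0)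
          (𝓝 (Sum.elim lam0 (fun _ => (0:ℝ)) j)) := by
      rintro (j1 | j2)
      · simp only [Sum.elim_inl, hlam10]
        have h := (tendsto_const_nhds (x := lam0 j1)).mul (hE α)
        simpa using h
      · simp only [Sum.elim_inr, hlam2_eq]
        have h := (tendsto_const_nhds (x := lamf j2)).mul
          ((tendsto_const_nhds (x := (1:ℝ))).sub (hE α))
        simpa using h
    have hν1 : ∀ j : Sum (Fin m0) (Fin m),
        Tendsto (fun t => Sum.elim μ0 (fun j2 => μt j2 t) j) (𝓝[Set.Ici t0] t0)
          (𝓝 (Sum.elim μ0 (fun j2 => μ0 (c j2)) j)) := by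
      rintro (j1 | j2)
      · simp only [Sum.elim_inl]
        exact tendsto_const_nhds
      · simp only [Sum.elim_inr, hμt]
        have h := (tendsto_const_nhds (x := μf j2)).add
          ((hE a).smul_const (μ0 (c j2) - μf j2))
        simpa using h
    have hS1 : ∀ j : Sum (Fin m0) (Fin m),
        Tendsto (fun t => Sum.elim S0 (fun j2 => St j2 t) j) (𝓝[Set.Ici t0] t0)
          (𝓝 (Sum.elim S0 (fun j2 => S0 (c j2)) j)) := by
      rintro (j1 | j2)
      · simp only [Sum.elim_inl]
        exact tendsto_const_nhds
      · simp only [Sum.elim_inr, hSt_eq]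
        have h := ((continuous_interpMat (S0 (c j2))
          (psdSqrt (psdSqrt (S0 (c j2)) * Sf j2 * psdSqrt (S0 (c j2))))
          (psdSqrt (S0 (c j2)))).tendsto 1).comp (hE b)
        rwa [interpMat_one _ (hAmul j2) (hAdet j2)] at h
    have hPD1 : ∀ j : Sum (Fin m0) (Fin m),
        (Sum.elim S0 (fun j2 => S0 (c j2)) j).PosDef := by
      rintro (j1 | j2)
      exacts [hS0 j1, hS0 (c j2)]
    have hcore := mixture_L2_tendsto (k := k) (l := 𝓝[Set.Ici t0] t0)
      (w := fun t => Sum.elim (lam10 t) (lam2 t))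
      (w' := Sum.elim lam0 (fun _ => (0:ℝ)))
      (ν := fun t => Sum.elim μ0 (fun j2 => μt j2 t))
      (ν' := Sum.elim μ0 (fun j2 => μ0 (c j2)))
      (Sg := fun t => Sum.elim S0 (fun j2 => St j2 t))
      (Sg' := Sum.elim S0 (fun j2 => S0 (c j2)))
      hw1 hν1 hS1 hPD1
    have hpt : ∀ t x, (φ x t - φ0 x)^2
        = ((∑ j : Sum (Fin m0) (Fin m), Sum.elim (lam10 t) (lam2 t) j *
            gaussPDF (Sum.elim μ0 (fun j2 => μt j2 t) j)
              (Sum.elim S0 (fun j2 => St j2 t) j) x)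
          - ∑ j : Sum (Fin m0) (Fin m), Sum.elim lam0 (fun _ => (0:ℝ)) j *
            gaussPDF (Sum.elim μ0 (fun j2 => μ0 (c j2)) j)
              (Sum.elim S0 (fun j2 => S0 (c j2)) j) x)^2 := by
      intro t x
      rw [hφ, hφ0]
      simp [Fintype.sum_sum_type]
    have hI : Tendsto (fun t => ∫ x : Fin k → ℝ, (φ x t - φ0 x)^2)
        (𝓝[Set.Ici t0] t0) (𝓝 0) := by
      simp only [hpt]
      exact hcore
    have hs := (Real.continuous_sqrt.tendsto 0).comp hI
    simpa [Function.comp_def] using hs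
  · -- t → ∞
    have hE0 : ∀ β : ℝ, β < 0 → Tendsto (fun t => Real.exp (β * (t - t0)))
        atTop (𝓝 0) := fun β hβ => tendsto_exp_lin_atTop hβ t0
    have hw2 : ∀ j : Sum (Fin m0) (Fin m),
        Tendsto (fun t => Sum.elim (lam10 t) (lam2 t) j) atTop
          (𝓝 (Sum.elim (fun _ => (0:ℝ)) lamf j)) := by
      rintro (j1 | j2)
      · simp only [Sum.elim_inl, hlam10]
        have h := (tendsto_const_nhds (x := lam0 j1)).mul (hE0 α hα)
        simpa using h
      · simp only [Sum.elim_inr, hlam2_eq]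
        have h := (tendsto_const_nhds (x := lamf j2)).mul
          ((tendsto_const_nhds (x := (1:ℝ))).sub (hE0 α hα))
        simpa using h
    have hν2 : ∀ j : Sum (Fin m0) (Fin m),
        Tendsto (fun t => Sum.elim μ0 (fun j2 => μt j2 t) j) atTop
          (𝓝 (Sum.elim μ0 μf j)) := by
      rintro (j1 | j2)
      · simp only [Sum.elim_inl]
        exact tendsto_const_nhds
      · simp only [Sum.elim_inr, hμt]
        have h := (tendsto_const_nhds (x := μf j2)).add
          ((hE0 a ha).smul_const (μ0 (c j2) - μf j2))
        simpa using h
    have hS2 : ∀ j : Sum (Fin m0) (Fin m),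
        Tendsto (fun t => Sum.elim S0 (fun j2 => St j2 t) j) atTop
          (𝓝 (Sum.elim S0 Sf j)) := by
      rintro (j1 | j2)
      · simp only [Sum.elim_inl]
        exact tendsto_const_nhds
      · simp only [Sum.elim_inr, hSt_eq]
        have h := ((continuous_interpMat (S0 (c j2))
          (psdSqrt (psdSqrt (S0 (c j2)) * Sf j2 * psdSqrt (S0 (c j2))))
          (psdSqrt (S0 (c j2)))).tendsto 0).comp (hE0 b hb)
        rwa [interpMat_zero _ (Sf j2) (hXmul j2) (hAdet j2)] at h
    have hPD2 : ∀ j : Sum (Fin m0) (Fin m), (Sum.elim S0 Sf j).PosDef := by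
      rintro (j1 | j2)
      exacts [hS0 j1, hSf j2]
    have hcore := mixture_L2_tendsto (k := k) (l := atTop)
      (w := fun t => Sum.elim (lam10 t) (lam2 t))
      (w' := Sum.elim (fun _ => (0:ℝ)) lamf)
      (ν := fun t => Sum.elim μ0 (fun j2 => μt j2 t))
      (ν' := Sum.elim μ0 μf)
      (Sg := fun t => Sum.elim S0 (fun j2 => St j2 t))
      (Sg' := Sum.elim S0 Sf)
      hw2 hν2 hS2 hPD2
    have hpt : ∀ t x, (φ x t - φf x)^2
        = ((∑ j : Sum (Fin m0) (Fin m), Sum.elim (lam10 t) (lam2 t) j *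
            gaussPDF (Sum.elim μ0 (fun j2 => μt j2 t) j)
              (Sum.elim S0 (fun j2 => St j2 t) j) x)
          - ∑ j : Sum (Fin m0) (Fin m), Sum.elim (fun _ => (0:ℝ)) lamf j *
            gaussPDF (Sum.elim μ0 μf j) (Sum.elim S0 Sf j) x)^2 := by
      intro t x
      rw [hφ, hφf]
      simp [Fintype.sum_sum_type]
    have hI : Tendsto (fun t => ∫ x : Fin k → ℝ, (φ x t - φf x)^2)
        atTop (𝓝 0) := by
      simp only [hpt]
      exact hcore
    have hs := (Real.continuous_sqrt.tendsto 0).comp hI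
    simpa [Function.comp_def] using hs
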